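/- Let x = v_x t^{μ_x} w_x with μ_x dominant, and define Φ_x = {α ∈ Φ⁺ : ⟨α, μ_x⟩ + δ_{w_x⁻¹α} − δ_{v_xα} = 0}. Then Φ⁺ \ Φ_x is a radical closed subset of Φ; equivalently, if α, β ∈ Φ⁺ and α + β ∈ Φ_x, then α ∈ Φ_x or β ∈ Φ_x. -/

import Mathlib

open scoped RealInnerProductSpace
noncomputable section

attribute [local instance] Classical.propDecidable

variable {V : Type*} [NormedAddCommGroup V] [InnerProductSpace ℝ V] [FiniteDimensional ℝ V]

/-- A (reduced, crystallographic) root system realized in a real inner product space: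
finite, roots nonzero, closed under the reflections `s_α`, crystallographic, and reduced. -/
structure IsRootSystem (Φ : Set V) : Prop where
  finite : Φ.Finite
  ne_zero : ∀ α ∈ Φ, α ≠ 0
  reflect_mem : ∀ α ∈ Φ, ∀ β ∈ Φ, β - (2 * ⟪α, β⟫ / ⟪α, α⟫) • α ∈ Φ
  crystallographic : ∀ α ∈ Φ, ∀ β ∈ Φ, ∃ n : ℤ, 2 * ⟪α, β⟫ / ⟪α, α⟫ = (n : ℝ)
  reduced : ∀ α ∈ Φ, ∀ t : ℝ, t • α ∈ Φ → t = 1 ∨ t = -1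

/-- A choice of positive roots `Φp` for the root system `Φ`. -/
structure IsPositiveSystem (Φ Φp : Set V) : Prop where
  subset : Φp ⊆ Φ
  neg_xor : ∀ α ∈ Φ, (α ∈ Φp ↔ -α ∉ Φp)
  add_mem : ∀ α ∈ Φp, ∀ β ∈ Φp, α + β ∈ Φ → α + β ∈ Φp

/-- `Δ` is the set of simple roots of the positive system `Φp`: every positive root is a
sum of simple roots through a sequence of partial sums all of which are positive roots. -/
structure IsBase (Φ Φp Δ : Set V) : Prop where
  subset : Δ ⊆ Φp
  gen : ∀ α ∈ Φp, ∃ l : List V, l ≠ [] ∧ (∀ β ∈ l, β ∈ Δ) ∧ l.sum = α ∧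
    ∀ n, n < l.length → (l.take (n + 1)).sum ∈ Φp

/-- The orthogonal reflection `s_α` in the hyperplane orthogonal to `α`. -/
def sRefl (α : V) : V ≃ₗᵢ[ℝ] V := Submodule.reflection (Submodule.span ℝ {α})ᗮ

/-- The Weyl group `W₀`: the group generated by the reflections in the roots. -/
def weylGroup (Φ : Set V) : Subgroup (V ≃ₗᵢ[ℝ] V) :=
  Subgroup.closure {w | ∃ α ∈ Φ, w = sRefl α}

/-- The coroot `α^∨ = 2α/⟨α,α⟩`. -/
def coro (α : V) : V := (2 / ⟪α, α⟫) • α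

/-- The length of a Weyl group element, as the number of inversions:
`ℓ(w) = #{α ∈ Φ⁺ : wα ∈ Φ⁻}`. -/
def len (Φp : Set V) (w : V ≃ₗᵢ[ℝ] V) : ℕ := {α ∈ Φp | w α ∉ Φp}.ncard

/-- The set `W_x = {r ∈ W₀ : r(Φ⁺ \ Φ_x) ⊆ Φ⁺}`. -/
def Wx (Φ Φp Φx : Set V) : Set (V ≃ₗᵢ[ℝ] V) :=
  {r | r ∈ weylGroup Φ ∧ ∀ β ∈ Φp \ Φx, r β ∈ Φp}

/-- Irreducibility: the set cannot be split into two nonempty mutually orthogonal parts. -/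
def RootIsIrreducible (Φ : Set V) : Prop :=
  Φ.Nonempty ∧ ∀ s t : Set V, Φ = s ∪ t → (∀ a ∈ s, ∀ b ∈ t, ⟪a, b⟫ = 0) →
    s = ∅ ∨ t = ∅

/-- The `k`-value `k(a, t^μ w) = ⟨a, μ⟩ + δ_{w⁻¹a}` of the alcove `t^μ w` with respect to
the root `a`, where `δ_β = 0` if `β` is positive and `-1` otherwise. -/
def kval (Φp : Set V) (a μ : V) (w : V ≃ₗᵢ[ℝ] V) : ℝ :=
  ⟪a, μ⟫ + (if w.symm a ∈ Φp then 0 else -1)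


set_option linter.unusedSectionVars false

lemma sRefl_apply' (α β : V) : sRefl α β = β - (2 * ⟪α, β⟫ / ⟪α, α⟫) • α := by
  rw [sRefl, Submodule.reflection_orthogonal_apply, Submodule.reflection_singleton_apply,
    real_inner_self_eq_norm_sq]
  simp only [RCLike.ofReal_real_eq_id, id_eq]
  match_scalars <;> ring

lemma sRefl_sRefl (α β : V) : sRefl α (sRefl α β) = β := Submodule.reflection_reflection _ _

lemma weyl_mem_iff {Φ : Set V} (hΦ : IsRootSystem Φ) {g : V ≃ₗᵢ[ℝ] V}
    (hg : g ∈ weylGroup Φ) : ∀ α : V, α ∈ Φ ↔ g α ∈ Φ := by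
  induction hg using Subgroup.closure_induction with
  | mem x hx =>
    obtain ⟨γ, hγ, rfl⟩ := hx
    intro α
    constructor
    · intro hα
      rw [sRefl_apply']
      exact hΦ.reflect_mem γ hγ α hα
    · intro hα
      have h := hΦ.reflect_mem γ hγ _ hα
      rw [← sRefl_apply', sRefl_sRefl] at h
      exact h
  | one => simp
  | mul x y hx hy ihx ihy =>
    intro α
    rw [ihy α, ihx (y α)]
    rfl
  | inv x hx ih =>
    intro α
    have h := ih (x⁻¹ α)
    have hxx : x (x⁻¹ α) = α := by
      simp
    rw [hxx] at h
    exact h.symm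

lemma root_neg_mem {Φ : Set V} (hΦ : IsRootSystem Φ) {α : V} (hα : α ∈ Φ) : -α ∈ Φ := by
  have h := hΦ.reflect_mem α hα α hα
  have hne : ⟪α, α⟫ ≠ 0 := (inner_self_ne_zero (𝕜 := ℝ)).mpr (hΦ.ne_zero α hα)
  have key : α - (2 * ⟪α, α⟫ / ⟪α, α⟫) • α = -α := by
    rw [show 2 * ⟪α, α⟫ / ⟪α, α⟫ = 2 by field_simp]
    match_scalars; ring
  rwa [key] at h

/-- for `x = v t^μ w` with `t^μ w` in the dominant chamber, the complement
`Φ⁺ \ Φ_x` is radical and closed, and `Φ_x` is "anti-closed": if `α + β ∈ Φ_x` for positive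
roots `α, β` then `α ∈ Φ_x` or `β ∈ Φ_x`. -/
theorem stmt10 (Φ Φp : Set V) (hΦ : IsRootSystem Φ) (hpos : IsPositiveSystem Φ Φp)
    (μ : V) (v w : V ≃ₗᵢ[ℝ] V) (hv : v ∈ weylGroup Φ) (hw : w ∈ weylGroup Φ)
    (hdom : ∀ β ∈ Φp, 0 ≤ ⟪β, μ⟫)
    (hint : ∀ γ ∈ Φ, ∃ n : ℤ, ⟪γ, μ⟫ = (n : ℝ))
    (hdomalcove : ∀ β ∈ Φp, 0 ≤ kval Φp β μ w)
    (Φx : Set V)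
    (hΦx : Φx = {γ ∈ Φp | ⟪γ, μ⟫ + (if w.symm γ ∈ Φp then (0 : ℝ) else -1)
      - (if v γ ∈ Φp then (0 : ℝ) else -1) = 0}) :
    ((Φp \ Φx) ∩ (-(Φp \ Φx)) = ∅) ∧
    (∀ α ∈ Φp \ Φx, ∀ β ∈ Φp \ Φx, α + β ∈ Φ → α + β ∈ Φp \ Φx) ∧
    (∀ α ∈ Φp, ∀ β ∈ Φp, α + β ∈ Φx → α ∈ Φx ∨ β ∈ Φx) := by
  classical
  set δ : V → ℝ := fun x => if x ∈ Φp then 0 else -1 with hδdef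
  have hδ01 : ∀ x, δ x = 0 ∨ δ x = -1 := by
    intro x; by_cases h : x ∈ Φp <;> simp [hδdef, h]
  have hδle : ∀ x, δ x ≤ 0 := by
    intro x; rcases hδ01 x with h | h <;> rw [h] <;> norm_num
  have hδge : ∀ x, (-1 : ℝ) ≤ δ x := by
    intro x; rcases hδ01 x with h | h <;> rw [h] <;> norm_num
  have hδlow : ∀ x ∈ Φ, ∀ y ∈ Φ, x + y ∈ Φ → δ x + δ y ≤ δ (x + y) := by
    intro x hx y hy hxy
    by_cases h1 : x ∈ Φp
    · by_cases h2 : y ∈ Φp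
      · have h3 := hpos.add_mem x h1 y h2 hxy
        simp [hδdef, h1, h2, h3]
      · have ha := hδge (x + y)
        have hx0 : δ x = 0 := by simp [hδdef, h1]
        have hy1 : δ y = -1 := by simp [hδdef, h2]
        linarith
    · have ha := hδge (x + y)
      have hb := hδle y
      have hx1 : δ x = -1 := by simp [hδdef, h1]
      linarith
  have hδhigh : ∀ x ∈ Φ, ∀ y ∈ Φ, x + y ∈ Φ → δ (x + y) ≤ δ x + δ y + 1 := by
    intro x hx y hy hxy
    by_cases h1 : x ∈ Φp
    · have ha := hδle (x + y)
      have hb := hδge y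
      have hx0 : δ x = 0 := by simp [hδdef, h1]
      linarith
    · by_cases h2 : y ∈ Φp
      · have ha := hδle (x + y)
        have hb := hδge x
        have hy0 : δ y = 0 := by simp [hδdef, h2]
        linarith
      · have hnx : -x ∈ Φp := by
          by_contra hnx
          exact h1 (((hpos.neg_xor x hx).mpr) hnx)
        have hny : -y ∈ Φp := by
          by_contra hny
          exact h2 (((hpos.neg_xor y hy).mpr) hny)
        have hnsum : -x + -y ∈ Φ := by
          have := root_neg_mem hΦ hxy
          rwa [show -(x + y) = -x + -y by abel] at this
        have h4 : -x + -y ∈ Φp := hpos.add_mem _ hnx _ hny hnsum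
        have h5 : x + y ∉ Φp := by
          intro h6
          have := (hpos.neg_xor (x + y) hxy).mp h6
          rw [show -(x + y) = -x + -y by abel] at this
          exact this h4
        have hx1 : δ x = -1 := by simp [hδdef, h1]
        have hy1 : δ y = -1 := by simp [hδdef, h2]
        have hs1 : δ (x + y) = -1 := by simp [hδdef, h5]
        linarith
  -- the function F γ = ⟨γ, μ⟩ + δ(w⁻¹γ) - δ(vγ)
  set F : V → ℝ := fun γ => ⟪γ, μ⟫ + δ (w.symm γ) - δ (v γ) with hFdef
  have hmemx : ∀ γ, γ ∈ Φx ↔ γ ∈ Φp ∧ F γ = 0 := by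
    intro γ; rw [hΦx]; exact Iff.rfl
  have hF0 : ∀ γ ∈ Φp, 0 ≤ F γ := by
    intro γ hγ
    have h1 : 0 ≤ ⟪γ, μ⟫ + δ (w.symm γ) := hdomalcove γ hγ
    have h2 := hδle (v γ)
    simp only [hFdef]
    linarith
  have hFint : ∀ γ ∈ Φ, ∃ n : ℤ, F γ = (n : ℝ) := by
    intro γ hγ
    obtain ⟨n, hn⟩ := hint γ hγ
    rcases hδ01 (w.symm γ) with h1 | h1 <;> rcases hδ01 (v γ) with h2 | h2
    exacts [⟨n, by simp only [hFdef, hn, h1, h2]; push_cast; ring⟩,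
      ⟨n + 1, by simp only [hFdef, hn, h1, h2]; push_cast; ring⟩,
      ⟨n - 1, by simp only [hFdef, hn, h1, h2]; push_cast; ring⟩,
      ⟨n, by simp only [hFdef, hn, h1, h2]; push_cast; ring⟩]
  have hFpos : ∀ γ ∈ Φp, γ ∉ Φx → 1 ≤ F γ := by
    intro γ hγ hγx
    have h1 : F γ ≠ 0 := by
      intro h
      exact hγx ((hmemx γ).mpr ⟨hγ, h⟩)
    obtain ⟨n, hn⟩ := hFint γ (hpos.subset hγ)
    have h2 := hF0 γ hγ
    rw [hn] at h1 h2 ⊢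
    have hn0 : n ≠ 0 := by exact_mod_cast h1
    have hn1 : (0 : ℤ) ≤ n := by exact_mod_cast h2
    exact_mod_cast by omega
  -- key superadditivity: F(α+β) ≥ F(α) + F(β) - 1 for positive α, β with α+β a root
  have hkey : ∀ α ∈ Φp, ∀ β ∈ Φp, α + β ∈ Φ → F α + F β - 1 ≤ F (α + β) := by
    intro α hα β hβ hαβ
    have hαΦ : α ∈ Φ := hpos.subset hα
    have hβΦ : β ∈ Φ := hpos.subset hβ
    have hwiff := weyl_mem_iff hΦ (inv_mem hw)
    have hviff := weyl_mem_iff hΦ hv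
    have hwα : w.symm α ∈ Φ := (hwiff α).mp hαΦ
    have hwβ : w.symm β ∈ Φ := (hwiff β).mp hβΦ
    have hwαβ : w.symm α + w.symm β ∈ Φ := by
      rw [← map_add]
      exact (hwiff (α + β)).mp hαβ
    have hvα : v α ∈ Φ := (hviff α).mp hαΦ
    have hvβ : v β ∈ Φ := (hviff β).mp hβΦ
    have hvαβ : v α + v β ∈ Φ := by
      rw [← map_add]
      exact (hviff (α + β)).mp hαβ
    have h1 := hδlow _ hwα _ hwβ hwαβ
    have h2 := hδhigh _ hvα _ hvβ hvαβ
    have e1 : w.symm (α + β) = w.symm α + w.symm β := map_add _ _ _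
    have e2 : v (α + β) = v α + v β := map_add _ _ _
    have e3 : ⟪α + β, μ⟫ = ⟪α, μ⟫ + ⟪β, μ⟫ := inner_add_left _ _ _
    simp only [hFdef, e1, e2, e3]
    linarith
  refine ⟨?_, ?_, ?_⟩
  · rw [Set.eq_empty_iff_forall_notMem]
    rintro γ ⟨⟨hγp, _⟩, hγn⟩
    rw [Set.mem_neg] at hγn
    obtain ⟨hnγp, _⟩ := hγn
    exact ((hpos.neg_xor γ (hpos.subset hγp)).mp hγp) hnγp
  · rintro α ⟨hαp, hαx⟩ β ⟨hβp, hβx⟩ hαβ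
    have hs : α + β ∈ Φp := hpos.add_mem α hαp β hβp hαβ
    refine ⟨hs, fun hmem => ?_⟩
    have h0 : F (α + β) = 0 := ((hmemx _).mp hmem).2
    have h1 := hFpos α hαp hαx
    have h2 := hFpos β hβp hβx
    have h3 := hkey α hαp β hβp hαβ
    linarith
  · intro α hαp β hβp hx
    obtain ⟨hs, h0⟩ := (hmemx _).mp hx
    by_contra hcon
    push_neg at hcon
    have h1 := hFpos α hαp hcon.1
    have h2 := hFpos β hβp hcon.2
    have h3 := hkey α hαp β hβp (hpos.subset hs)
    linarith
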